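/- Let Λ be a finite set and g : Λ×Λ → {0,1} a function with disc(g) ≤ |Λ|^{−η} for some η > 0. For any 0 < λ ≤ η, if Y⁰, Y¹ are independent random variables on Λ with H_∞(Y⁰) + H_∞(Y¹) ≥ (2 − η + λ)·log₂|Λ|, then bias(g(Y⁰,Y¹)) ≤ |Λ|^{−λ}. -/

import Mathlib

/-!
Write `M₀, M₁` for the largest point masses of `μ0, μ1`. Since `0 ≤ μᵢ ≤ Mᵢ`, the bilinear form
`∑ μ0 u μ1 w ε(u, w)` (with `ε = ±1` according to `g`) is at most `M₀ M₁` times the largest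
rectangle sum of `ε`: maximising a linear form over the box `[0, Mᵢ]^Λ` picks the coordinates with
nonnegative coefficient, one variable at a time. The discrepancy bound makes every rectangle sum at
most `|Λ|^{2-η}`, and the min-entropy bound says `M₀ M₁ ≤ |Λ|^{η-λ-2}`.
-/

open Finset

/-- `Pr[(U,V) ∈ R₁×R₂ ∧ g(U,V) = v]` for independent uniform `U, V` on a finite set `Λ`. -/
noncomputable def prRect {Λ : Type} [Fintype Λ] [DecidableEq Λ] (g : Λ → Λ → Bool)
    (R₁ R₂ : Finset Λ) (v : Bool) : ℝ :=
  (∑ u : Λ, ∑ w : Λ, if u ∈ R₁ ∧ w ∈ R₂ ∧ g u w = v then (1 : ℝ) else 0)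
    / ((Fintype.card Λ : ℝ) * (Fintype.card Λ : ℝ))

noncomputable def minEntropy {Λ : Type} [Fintype Λ] [Nonempty Λ] (μ : Λ → ℝ) : ℝ :=
  -Real.logb 2 (Finset.univ.sup' Finset.univ_nonempty μ)

section BilinearBox

variable {ι κ : Type*}

lemma sum_mul_le_mul_sum_filter_nonneg (s : Finset ι) (f c : ι → ℝ) {M : ℝ}
    (hf₀ : ∀ i, 0 ≤ f i) (hfM : ∀ i, f i ≤ M) :
    ∑ i ∈ s, f i * c i ≤ M * ∑ i ∈ s with 0 ≤ c i, c i := by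
  rw [sum_filter, mul_sum]
  refine sum_le_sum fun i _ => ?_
  split_ifs with hc
  · exact mul_le_mul_of_nonneg_right (hfM i) hc
  · nlinarith [hf₀ i]

lemma sum_sum_mul_le_of_forall_rect_le (s : Finset ι) (t : Finset κ) (e : ι → κ → ℝ) {C : ℝ}
    (hC : ∀ R₁ ⊆ s, ∀ R₂ ⊆ t, ∑ i ∈ R₁, ∑ j ∈ R₂, e i j ≤ C)
    (f₀ : ι → ℝ) (f₁ : κ → ℝ) {M₀ M₁ : ℝ} (hM₀ : 0 ≤ M₀) (hM₁ : 0 ≤ M₁)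
    (hf₀ : ∀ i, 0 ≤ f₀ i) (hf₀M : ∀ i, f₀ i ≤ M₀)
    (hf₁ : ∀ j, 0 ≤ f₁ j) (hf₁M : ∀ j, f₁ j ≤ M₁) :
    ∑ i ∈ s, ∑ j ∈ t, f₀ i * f₁ j * e i j ≤ M₀ * M₁ * C := by
  set c : ι → ℝ := fun i => ∑ j ∈ t, f₁ j * e i j
  set R₁ := {i ∈ s | 0 ≤ c i}
  set d : κ → ℝ := fun j => ∑ i ∈ R₁, e i j
  set R₂ := {j ∈ t | 0 ≤ d j}
  calc ∑ i ∈ s, ∑ j ∈ t, f₀ i * f₁ j * e i j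
      = ∑ i ∈ s, f₀ i * c i := by simp only [c, mul_sum, mul_assoc]
    _ ≤ M₀ * ∑ i ∈ R₁, c i := sum_mul_le_mul_sum_filter_nonneg s f₀ c hf₀ hf₀M
    _ = M₀ * ∑ j ∈ t, f₁ j * d j := by simp only [c, d, mul_sum, sum_comm (s := R₁)]
    _ ≤ M₀ * (M₁ * ∑ j ∈ R₂, d j) :=
        mul_le_mul_of_nonneg_left (sum_mul_le_mul_sum_filter_nonneg t f₁ d hf₁ hf₁M) hM₀
    _ = M₀ * M₁ * ∑ i ∈ R₁, ∑ j ∈ R₂, e i j := by rw [sum_comm, mul_assoc]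
    _ ≤ M₀ * M₁ * C :=
        mul_le_mul_of_nonneg_left (hC R₁ (filter_subset _ _) R₂ (filter_subset _ _))
          (mul_nonneg hM₀ hM₁)

lemma abs_sum_sum_mul_le_of_forall_abs_rect_le (s : Finset ι) (t : Finset κ) (e : ι → κ → ℝ)
    {C : ℝ} (hC : ∀ R₁ ⊆ s, ∀ R₂ ⊆ t, |∑ i ∈ R₁, ∑ j ∈ R₂, e i j| ≤ C)
    (f₀ : ι → ℝ) (f₁ : κ → ℝ) {M₀ M₁ : ℝ} (hM₀ : 0 ≤ M₀) (hM₁ : 0 ≤ M₁)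
    (hf₀ : ∀ i, 0 ≤ f₀ i) (hf₀M : ∀ i, f₀ i ≤ M₀)
    (hf₁ : ∀ j, 0 ≤ f₁ j) (hf₁M : ∀ j, f₁ j ≤ M₁) :
    |∑ i ∈ s, ∑ j ∈ t, f₀ i * f₁ j * e i j| ≤ M₀ * M₁ * C := by
  have hneg := sum_sum_mul_le_of_forall_rect_le s t (fun i j => -e i j) (C := C)
    (fun R₁ h₁ R₂ h₂ => by
      simpa only [sum_neg_distrib] using neg_le.mp (neg_le_of_abs_le (hC R₁ h₁ R₂ h₂)))
    f₀ f₁ hM₀ hM₁ hf₀ hf₀M hf₁ hf₁M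
  have hpos := sum_sum_mul_le_of_forall_rect_le s t e
    (fun R₁ h₁ R₂ h₂ => le_of_abs_le (hC R₁ h₁ R₂ h₂)) f₀ f₁ hM₀ hM₁ hf₀ hf₀M hf₁ hf₁M
  simp only [mul_neg, sum_neg_distrib] at hneg
  exact abs_le.mpr ⟨by linarith, hpos⟩

end BilinearBox

section Discrepancy

variable {Λ : Type} [Fintype Λ]

def boolSign (b : Bool) : ℝ := bif b then -1 else 1

lemma ite_false_sub_ite_true (b : Bool) :
    ((if b = false then 1 else 0) - (if b = true then 1 else 0) : ℝ) = boolSign b := by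
  cases b <;> norm_num [boolSign]

lemma prRect_false_sub_true_mul [DecidableEq Λ] [Nonempty Λ] (g : Λ → Λ → Bool)
    (R₁ R₂ : Finset Λ) :
    (prRect g R₁ R₂ false - prRect g R₁ R₂ true) * (Fintype.card Λ * Fintype.card Λ) =
      ∑ u ∈ R₁, ∑ w ∈ R₂, boolSign (g u w) := by
  have hN : (Fintype.card Λ * Fintype.card Λ : ℝ) ≠ 0 := by positivity
  simp only [prRect, ← sub_div, div_mul_cancel₀ _ hN, ite_and, sum_ite_irrel, sum_ite_mem,
    univ_inter, sum_const_zero, ← sum_sub_distrib, ite_false_sub_ite_true]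

lemma abs_sum_sum_boolSign_le [DecidableEq Λ] [Nonempty Λ] (g : Λ → Λ → Bool) {η : ℝ}
    (hdisc : ∀ R₁ R₂ : Finset Λ,
      |prRect g R₁ R₂ false - prRect g R₁ R₂ true| ≤ (Fintype.card Λ : ℝ) ^ (-η))
    (R₁ R₂ : Finset Λ) :
    |∑ u ∈ R₁, ∑ w ∈ R₂, boolSign (g u w)| ≤ (Fintype.card Λ : ℝ) ^ (2 - η) := by
  have hN : (0 : ℝ) < Fintype.card Λ := Nat.cast_pos.mpr Fintype.card_pos
  rw [← prRect_false_sub_true_mul, abs_mul, abs_of_pos (mul_pos hN hN)]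
  calc |prRect g R₁ R₂ false - prRect g R₁ R₂ true| * (Fintype.card Λ * Fintype.card Λ)
      ≤ (Fintype.card Λ : ℝ) ^ (-η) * (Fintype.card Λ * Fintype.card Λ) := by
        gcongr; exact hdisc R₁ R₂
    _ = (Fintype.card Λ : ℝ) ^ (2 - η) := by
        rw [sub_eq_neg_add, Real.rpow_add hN, Real.rpow_two, sq]

lemma sum_sum_sub_sum_sum_eq_sum_sum_boolSign (g : Λ → Λ → Bool) (μ0 μ1 : Λ → ℝ) :
    (∑ y0, ∑ y1, μ0 y0 * μ1 y1 * (if g y0 y1 = false then 1 else 0))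
      - (∑ y0, ∑ y1, μ0 y0 * μ1 y1 * (if g y0 y1 = true then 1 else 0))
      = ∑ y0, ∑ y1, μ0 y0 * μ1 y1 * boolSign (g y0 y1) := by
  simp only [← sum_sub_distrib, ← mul_sub, ite_false_sub_ite_true]

end Discrepancy

section MinEntropy

variable {Λ : Type} [Fintype Λ] [Nonempty Λ]

lemma sup'_pos_of_sum_pos (μ : Λ → ℝ) (hμ : 0 < ∑ y, μ y) : 0 < univ.sup' univ_nonempty μ :=
  (lt_sup'_iff univ_nonempty).mpr (exists_lt_of_sum_lt (f := 0) (by simpa using hμ))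

lemma sup'_mul_sup'_le_rpow_of_le_minEntropy_add (μ0 μ1 : Λ → ℝ)
    (hμ0 : 0 < univ.sup' univ_nonempty μ0) (hμ1 : 0 < univ.sup' univ_nonempty μ1) {k : ℝ}
    (hent : k * Real.logb 2 (Fintype.card Λ) ≤ minEntropy μ0 + minEntropy μ1) :
    univ.sup' univ_nonempty μ0 * univ.sup' univ_nonempty μ1 ≤ (Fintype.card Λ : ℝ) ^ (-k) := by
  have hN : (0 : ℝ) < Fintype.card Λ := Nat.cast_pos.mpr Fintype.card_pos
  rw [← Real.logb_le_logb one_lt_two (by positivity) (by positivity),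
    Real.logb_mul hμ0.ne' hμ1.ne', Real.logb_rpow_eq_mul_logb_of_pos hN]
  rw [minEntropy, minEntropy] at hent
  linarith

end MinEntropy

theorem stmt12_general {Λ : Type} [Fintype Λ] [DecidableEq Λ] [Nonempty Λ]
    (g : Λ → Λ → Bool) (η : ℝ)
    (hdisc : ∀ R₁ R₂ : Finset Λ,
      |prRect g R₁ R₂ false - prRect g R₁ R₂ true| ≤ (Fintype.card Λ : ℝ) ^ (-η))
    (lam : ℝ)
    (μ0 μ1 : Λ → ℝ)
    (hμ00 : ∀ y, 0 ≤ μ0 y) (hμ01 : ∑ y, μ0 y = 1)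
    (hμ10 : ∀ y, 0 ≤ μ1 y) (hμ11 : ∑ y, μ1 y = 1)
    (hent : (2 - η + lam) * Real.logb 2 (Fintype.card Λ) ≤
      minEntropy μ0 + minEntropy μ1) :
    |(∑ y0, ∑ y1, μ0 y0 * μ1 y1 * (if g y0 y1 = false then 1 else 0))
      - (∑ y0, ∑ y1, μ0 y0 * μ1 y1 * (if g y0 y1 = true then 1 else 0))|
      ≤ (Fintype.card Λ : ℝ) ^ (-lam) := by
  set N : ℝ := (Fintype.card Λ : ℝ)
  have hN : 0 < N := Nat.cast_pos.mpr Fintype.card_pos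
  set M0 := univ.sup' univ_nonempty μ0
  set M1 := univ.sup' univ_nonempty μ1
  have hM0 : 0 < M0 := sup'_pos_of_sum_pos μ0 (hμ01 ▸ one_pos)
  have hM1 : 0 < M1 := sup'_pos_of_sum_pos μ1 (hμ11 ▸ one_pos)
  have hbilin : |∑ y0, ∑ y1, μ0 y0 * μ1 y1 * boolSign (g y0 y1)| ≤ M0 * M1 * N ^ (2 - η) :=
    abs_sum_sum_mul_le_of_forall_abs_rect_le univ univ _
      (fun R₁ _ R₂ _ => abs_sum_sum_boolSign_le g hdisc R₁ R₂) μ0 μ1 hM0.le hM1.le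
      hμ00 (fun y => le_sup' μ0 (mem_univ y)) hμ10 (fun y => le_sup' μ1 (mem_univ y))
  have hmass : M0 * M1 ≤ N ^ (-(2 - η + lam)) :=
    sup'_mul_sup'_le_rpow_of_le_minEntropy_add μ0 μ1 hM0 hM1 hent
  rw [sum_sum_sub_sum_sum_eq_sum_sum_boolSign]
  calc _ ≤ M0 * M1 * N ^ (2 - η) := hbilin
    _ ≤ N ^ (-(2 - η + lam)) * N ^ (2 - η) := by gcongr
    _ = N ^ (-lam) := by rw [← Real.rpow_add hN]; ring_nf

/-- Low-discrepancy maps preserve uniformity: if `disc(g) ≤ |Λ|^{−η}` and the independent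
random variables `Y⁰, Y¹` satisfy `H_∞(Y⁰) + H_∞(Y¹) ≥ (2−η+λ)·log₂|Λ|`, then
`bias(g(Y⁰,Y¹)) ≤ |Λ|^{−λ}`. -/
theorem stmt12 {Λ : Type} [Fintype Λ] [DecidableEq Λ] [Nonempty Λ]
    (g : Λ → Λ → Bool) (η : ℝ) (hη : 0 < η)
    (hdisc : ∀ R₁ R₂ : Finset Λ,
      |prRect g R₁ R₂ false - prRect g R₁ R₂ true| ≤ (Fintype.card Λ : ℝ) ^ (-η))
    (lam : ℝ) (hlam0 : 0 < lam) (hlamη : lam ≤ η)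
    (μ0 μ1 : Λ → ℝ)
    (hμ00 : ∀ y, 0 ≤ μ0 y) (hμ01 : ∑ y, μ0 y = 1)
    (hμ10 : ∀ y, 0 ≤ μ1 y) (hμ11 : ∑ y, μ1 y = 1)
    (hent : (2 - η + lam) * Real.logb 2 (Fintype.card Λ) ≤
      minEntropy μ0 + minEntropy μ1) :
    |(∑ y0, ∑ y1, μ0 y0 * μ1 y1 * (if g y0 y1 = false then 1 else 0))
      - (∑ y0, ∑ y1, μ0 y0 * μ1 y1 * (if g y0 y1 = true then 1 else 0))|
      ≤ (Fintype.card Λ : ℝ) ^ (-lam) :=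
  stmt12_general g η hdisc lam μ0 μ1 hμ00 hμ01 hμ10 hμ11 hent
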